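/- (Exactly solvable case c = 1.) Let a > 0, N ≥ 1, and for an integer k ≥ 0 set e_k(x) = Σ_{m=0}^{k} x^m/m!. Define P_k(z) := ( z^{k+1} − a^{k+1} · e_k(N a z)/e_k(N a²) ) / (z − a). Then P_k is a monic polynomial of degree k; it satisfies the orthogonality ∫_ℂ P_k(z) conj(z)^m |z−a|² e^{−N|z|²} dA(z) = 0 for all 0 ≤ m < k; distinct P_k are orthogonal, and its squared norm is h_k = ∫_ℂ |P_k(z)|² |z−a|² e^{−N|z|²} dA(z) = ((k+1)!/N^{k+2}) · e_{k+1}(N a²)/e_k(N a²). Equivalently, with the regularized incomplete gamma function Q(s,x) = Γ(s,x)/Γ(s), P_k(z) = (1/(z−a)) ( z^{k+1} − e^{aN(z−a)} (Q(k+1, N a z)/Q(k+1, N a²)) a^{k+1} ) and h_k = ((k+1)!/N^{k+2}) Q(k+2, N a²)/Q(k+1, N a²). -/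

import Mathlib

/-!
With `F_k(z) = z^{k+1} - a^{k+1} e_k(Naz)/e_k(Na²) = (z - a) P_k(z)`, the weight `|z - a|²` turns
every integral in the statement into the Gaussian inner product `⟨F, G⟩ = ∫ F Ḡ e^{-N|z|²}` of
numerators. For this inner product the monomials are orthogonal with `‖zⁱ‖² = π i!/N^{i+1}`, so
`K(z) = e_k(Naz)` is the reproducing kernel at `a` of the polynomials of degree `≤ k`:
`⟨R, K⟩ = (π/N) R(a)`. Since `F_k = z^{k+1} - c K` and `z^{k+1} ⊥ R` for `deg R ≤ k`, `F_k` is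
orthogonal to every polynomial of degree `≤ k` vanishing at `a`, e.g. `(z - a) z^m` (`m < k`) and
`F_l` (`l < k`); and `‖F_k‖² = ‖z^{k+1}‖² + |c|² ⟨K, K⟩` gives `h_k`.
-/

open MeasureTheory Polynomial Finset

noncomputable section

/-- Truncated exponential `e_k(x) = ∑_{m=0}^{k} x^m/m!` (complex version). -/
def ekC (k : ℕ) (x : ℂ) : ℂ := ∑ m ∈ Finset.range (k + 1), x ^ m / (Nat.factorial m : ℂ)

/-- Truncated exponential `e_k(x) = ∑_{m=0}^{k} x^m/m!` (real version). -/
def ekR (k : ℕ) (x : ℝ) : ℝ := ∑ m ∈ Finset.range (k + 1), x ^ m / (Nat.factorial m : ℝ)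

/-- Regularized incomplete gamma function at integer first argument (real version):
`Q(s,x) = Γ(s,x)/Γ(s) = e^{-x} ∑_{m=0}^{s-1} x^m/m!`. -/
def Qreg (s : ℕ) (x : ℝ) : ℝ :=
  Real.exp (-x) * ∑ m ∈ Finset.range s, x ^ m / (Nat.factorial m : ℝ)

/-- Regularized incomplete gamma function at integer first argument (complex version). -/
def QregC (s : ℕ) (x : ℂ) : ℂ :=
  Complex.exp (-x) * ∑ m ∈ Finset.range s, x ^ m / (Nat.factorial m : ℂ)

/-- The explicit `c = 1` orthogonal polynomial
`P_k(z) = (z^{k+1} - a^{k+1} e_k(Naz)/e_k(Na²))/(z-a)`. -/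
def Pc1 (a : ℝ) (N : ℕ) (k : ℕ) (z : ℂ) : ℂ :=
  (z ^ (k + 1) - (a : ℂ) ^ (k + 1) * ekC k ((N : ℂ) * a * z) / ekC k ((N : ℂ) * (a : ℂ) ^ 2)) /
    (z - (a : ℂ))

/-- The explicit squared norm `h_k = ((k+1)!/N^{k+2}) e_{k+1}(Na²)/e_k(Na²)`. -/
def hc1 (a : ℝ) (N : ℕ) (k : ℕ) : ℝ :=
  ((Nat.factorial (k + 1) : ℝ) / (N : ℝ) ^ (k + 2)) * (ekR (k + 1) (N * a ^ 2) / ekR k (N * a ^ 2))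

open ComplexConjugate
open scoped Nat Real

section GaussianMoments

variable {b : ℝ}

lemma integrable_norm_pow_mul_exp_neg_mul_sq (hb : 0 < b) (m : ℕ) :
    Integrable fun z : ℂ => ‖z‖ ^ m * Real.exp (-b * ‖z‖ ^ 2) := by
  refine (integrable_fun_norm_addHaar volume (f := fun r => r ^ m * Real.exp (-b * r ^ 2))).2 ?_
  have h := integrableOn_rpow_mul_exp_neg_mul_sq hb
    (neg_one_lt_zero.trans_le (Nat.cast_nonneg (m + 1)))
  refine h.congr_fun (fun r _ => ?_) measurableSet_Ioi
  simp only [Complex.finrank_real_complex, Real.rpow_natCast, smul_eq_mul]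
  ring

lemma integrable_pow_mul_conj_pow_mul_exp_neg_mul_sq (hb : 0 < b) (p q : ℕ) :
    Integrable fun z : ℂ => z ^ p * conj z ^ q * (Real.exp (-b * ‖z‖ ^ 2) : ℂ) := by
  refine (integrable_norm_pow_mul_exp_neg_mul_sq hb (p + q)).mono' (by fun_prop) ?_
  filter_upwards with z
  simp only [norm_mul, norm_pow, Complex.norm_conj, Complex.norm_real,
    Real.norm_of_nonneg (Real.exp_pos _).le, pow_add, le_refl]

lemma integral_Ioi_pow_mul_exp_neg_mul_sq (hb : 0 < b) (n : ℕ) :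
    ∫ r in Set.Ioi (0 : ℝ), r ^ (2 * n + 1) * Real.exp (-b * r ^ 2) = n ! / (2 * b ^ (n + 1)) := by
  have h := integral_rpow_mul_exp_neg_mul_rpow two_pos
    (neg_one_lt_zero.trans_le (Nat.cast_nonneg (2 * n + 1))) hb
  rw [show (((2 * n + 1 : ℕ) : ℝ) + 1) / 2 = n + 1 by push_cast; ring,
    Real.Gamma_nat_eq_factorial, show -(((2 * n + 1 : ℕ) : ℝ) + 1) / 2 = -((n + 1 : ℕ) : ℝ) by
      push_cast; ring, Real.rpow_neg hb.le, Real.rpow_natCast] at h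
  simp only [Real.rpow_natCast, Real.rpow_two] at h
  rw [h]
  field_simp

lemma integral_Ioo_neg_pi_pi_cexp_int_mul_I {c : ℤ} (hc : c ≠ 0) :
    ∫ θ in Set.Ioo (-π) π, Complex.exp (c * θ * Complex.I) = 0 := by
  rw [← integral_Ioc_eq_integral_Ioo, ← intervalIntegral.integral_of_le (by linarith [Real.pi_pos])]
  simp_rw [mul_right_comm _ _ Complex.I]
  rw [integral_exp_mul_complex (by simp [hc])]
  have key : ∀ x : ℝ, (c : ℂ) * Complex.I * x = c * (x * Complex.I) := fun x => by ring
  rw [key, key, Complex.exp_int_mul, Complex.exp_int_mul, Complex.ofReal_neg, neg_mul,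
    Complex.exp_neg, Complex.exp_pi_mul_I, inv_neg_one, sub_self, zero_div]

lemma polarCoord_symm_pow_mul_conj_pow (x : ℝ × ℝ) (p q : ℕ) :
    Complex.polarCoord.symm x ^ p * conj (Complex.polarCoord.symm x) ^ q =
      (x.1 ^ (p + q) : ℝ) * Complex.exp (((p - q : ℤ) : ℂ) * x.2 * Complex.I) := by
  have hx : Complex.polarCoord.symm x = x.1 * Complex.exp (x.2 * Complex.I) := by
    rw [Complex.polarCoord_symm_apply, Complex.exp_mul_I, ← Complex.ofReal_cos,
      ← Complex.ofReal_sin]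
  have hconj : conj (Complex.exp (x.2 * Complex.I)) = Complex.exp (-(x.2 * Complex.I)) := by
    rw [← Complex.exp_conj, map_mul, Complex.conj_ofReal, Complex.conj_I, mul_neg]
  rw [hx, map_mul, Complex.conj_ofReal, hconj, mul_pow, mul_pow, ← Complex.exp_nat_mul,
    ← Complex.exp_nat_mul, mul_mul_mul_comm, ← Complex.exp_add]
  push_cast
  ring_nf

lemma integral_pow_mul_conj_pow_mul_exp_neg_mul_sq (hb : 0 < b) (p q : ℕ) :
    ∫ z : ℂ, z ^ p * conj z ^ q * (Real.exp (-b * ‖z‖ ^ 2) : ℂ) =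
      if p = q then ((π * p ! / b ^ (p + 1) : ℝ) : ℂ) else 0 := by
  rw [← Complex.integral_comp_polarCoord_symm]
  have polar : ∀ x ∈ polarCoord.target,
      x.1 • (Complex.polarCoord.symm x ^ p * conj (Complex.polarCoord.symm x) ^ q *
        (Real.exp (-b * ‖Complex.polarCoord.symm x‖ ^ 2) : ℂ)) =
      ((x.1 ^ (p + q + 1) * Real.exp (-b * x.1 ^ 2) : ℝ) : ℂ) *
        Complex.exp (((p - q : ℤ) : ℂ) * x.2 * Complex.I) := by
    rintro x ⟨hr : 0 < x.1, -⟩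
    rw [polarCoord_symm_pow_mul_conj_pow, Complex.norm_polarCoord_symm, abs_of_pos hr,
      Complex.real_smul]
    push_cast
    ring
  rw [setIntegral_congr_fun polarCoord.open_target.measurableSet polar, polarCoord_target,
    Measure.volume_eq_prod, setIntegral_prod_mul
      (fun r : ℝ => ((r ^ (p + q + 1) * Real.exp (-b * r ^ 2) : ℝ) : ℂ))
      (fun θ : ℝ => Complex.exp (((p - q : ℤ) : ℂ) * θ * Complex.I)), integral_complex_ofReal]
  split_ifs with hpq
  · subst hpq
    rw [sub_self, Int.cast_zero]
    simp only [zero_mul, Complex.exp_zero, setIntegral_const]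
    rw [Real.volume_real_Ioo_of_le (by linarith [Real.pi_pos]), Complex.real_smul, mul_one,
      ← two_mul p, integral_Ioi_pow_mul_exp_neg_mul_sq hb]
    push_cast
    field_simp
    ring
  · rw [integral_Ioo_neg_pi_pi_cexp_int_mul_I (sub_ne_zero.2 (by exact_mod_cast hpq)), mul_zero]

end GaussianMoments

/-- The weight is `e^{-b|z|²}` against Lebesgue measure `d²z`, not `dA = d²z/π`: hence the
factors `π` below. -/
def gaussianInner (b : ℝ) (p q : ℂ[X]) : ℂ :=
  ∫ z : ℂ, p.eval z * conj (q.eval z) * (Real.exp (-b * ‖z‖ ^ 2) : ℂ)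

section GaussianInner
variable {b : ℝ}

lemma conj_gaussianInner (p q : ℂ[X]) : conj (gaussianInner b p q) = gaussianInner b q p := by
  rw [gaussianInner, ← integral_conj, gaussianInner]
  congr 1 with z
  simp only [map_mul, Complex.conj_conj, Complex.conj_ofReal]
  ring

lemma gaussianInner_eq_sum (hb : 0 < b) {p : ℂ[X]} {n : ℕ} (hp : p.natDegree < n) (q : ℂ[X]) :
    gaussianInner b p q =
      ∑ i ∈ range n, p.coeff i * conj (q.coeff i) * ((π * i ! / b ^ (i + 1) : ℝ) : ℂ) := by
  set M := max n (q.natDegree + 1)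
  have hq : q.natDegree < M := lt_max_of_lt_right (Nat.lt_succ_self _)
  have expand : ∀ z : ℂ, p.eval z * conj (q.eval z) * (Real.exp (-b * ‖z‖ ^ 2) : ℂ) =
      ∑ i ∈ range n, ∑ j ∈ range M, p.coeff i * conj (q.coeff j) *
        (z ^ i * conj z ^ j * (Real.exp (-b * ‖z‖ ^ 2) : ℂ)) := by
    intro z
    rw [eval_eq_sum_range' hp, eval_eq_sum_range' hq, map_sum, sum_mul_sum, sum_mul]
    refine sum_congr rfl fun i _ => ?_
    rw [sum_mul]
    refine sum_congr rfl fun j _ => ?_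
    rw [map_mul, map_pow]
    ring
  have hint := integrable_pow_mul_conj_pow_mul_exp_neg_mul_sq hb
  rw [gaussianInner, integral_congr_ae (.of_forall expand),
    integral_finsetSum _ fun i _ => integrable_finsetSum _ fun j _ => (hint i j).const_mul _]
  refine sum_congr rfl fun i hi => ?_
  rw [integral_finsetSum _ fun j _ => (hint i j).const_mul _]
  simp_rw [integral_const_mul, integral_pow_mul_conj_pow_mul_exp_neg_mul_sq hb, mul_ite, mul_zero]
  rw [sum_ite_eq, if_pos (mem_range.2 ((mem_range.1 hi).trans_le (le_max_left _ _)))]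

lemma gaussianInner_sub_left (hb : 0 < b) (p q r : ℂ[X]) :
    gaussianInner b (p - q) r = gaussianInner b p r - gaussianInner b q r := by
  set n := max p.natDegree q.natDegree + 1
  have hp : p.natDegree < n := Nat.lt_succ_of_le (le_max_left _ _)
  have hq : q.natDegree < n := Nat.lt_succ_of_le (le_max_right _ _)
  rw [gaussianInner_eq_sum hb (n := n) ((natDegree_sub_le p q).trans_lt (Nat.lt_succ_self _)),
    gaussianInner_eq_sum hb hp, gaussianInner_eq_sum hb hq, ← sum_sub_distrib]
  simp only [coeff_sub, sub_mul]

lemma gaussianInner_C_mul_left (hb : 0 < b) (c : ℂ) (p r : ℂ[X]) :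
    gaussianInner b (C c * p) r = c * gaussianInner b p r := by
  have hp : p.natDegree < p.natDegree + 1 := Nat.lt_succ_self _
  rw [gaussianInner_eq_sum hb ((natDegree_C_mul_le c p).trans_lt hp), gaussianInner_eq_sum hb hp,
    mul_sum]
  simp only [coeff_C_mul, mul_assoc]

lemma gaussianInner_sub_right (hb : 0 < b) (p q r : ℂ[X]) :
    gaussianInner b p (q - r) = gaussianInner b p q - gaussianInner b p r := by
  rw [← conj_gaussianInner, gaussianInner_sub_left hb, map_sub, conj_gaussianInner,
    conj_gaussianInner]

lemma gaussianInner_C_mul_right (hb : 0 < b) (c : ℂ) (p r : ℂ[X]) :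
    gaussianInner b p (C c * r) = conj c * gaussianInner b p r := by
  rw [← conj_gaussianInner, gaussianInner_C_mul_left hb, map_mul, conj_gaussianInner]

lemma gaussianInner_X_pow_self (hb : 0 < b) (n : ℕ) :
    gaussianInner b (X ^ n) (X ^ n) = ((π * n ! / b ^ (n + 1) : ℝ) : ℂ) := by
  rw [gaussianInner_eq_sum hb (n := n + 1) (by simp), sum_range_succ, sum_eq_zero]
  · simp
  · intro i hi
    simp [(mem_range.1 hi).ne]

lemma gaussianInner_X_pow_eq_zero (hb : 0 < b) {n : ℕ} {q : ℂ[X]} (hq : q.natDegree < n) :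
    gaussianInner b q (X ^ n) = 0 := by
  rw [gaussianInner_eq_sum hb hq]
  refine sum_eq_zero fun i hi => ?_
  simp [(mem_range.1 hi).ne]

end GaussianInner

/-- `z ↦ e_k(b w̄ z)`, the reproducing kernel at `w` of the polynomials of degree `≤ k`. -/
def truncExpKernel (b : ℝ) (k : ℕ) (w : ℂ) : ℂ[X] :=
  ∑ j ∈ range (k + 1), C ((b * conj w) ^ j / j !) * X ^ j

/-- The numerator `(z - w) P_k(z)` of the paper's `P_k` (at `b = N`, `w = a`). -/
def truncExpNumerator (b : ℝ) (k : ℕ) (w : ℂ) : ℂ[X] :=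
  X ^ (k + 1) - C (w ^ (k + 1) / (truncExpKernel b k w).eval w) * truncExpKernel b k w

lemma ekR_pos (k : ℕ) {x : ℝ} (hx : 0 ≤ x) : 0 < ekR k x :=
  sum_pos' (fun m _ => by positivity) ⟨0, by simp⟩

section Kernel
variable {b : ℝ} {k : ℕ} {w : ℂ}

lemma eval_truncExpKernel (z : ℂ) : (truncExpKernel b k w).eval z = ekC k (b * conj w * z) := by
  simp only [truncExpKernel, eval_finsetSum, eval_mul, eval_C, eval_pow, eval_X, ekC, mul_pow]
  exact sum_congr rfl fun j _ => by ring

lemma eval_truncExpKernel_self : (truncExpKernel b k w).eval w = (ekR k (b * ‖w‖ ^ 2) : ℂ) := by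
  rw [eval_truncExpKernel, mul_assoc, Complex.conj_mul', ekC, ekR]
  push_cast
  rfl

lemma coeff_truncExpKernel {i : ℕ} (hi : i ≤ k) :
    (truncExpKernel b k w).coeff i = (b * conj w) ^ i / i ! := by
  simp [truncExpKernel, Nat.lt_succ_of_le hi]

lemma natDegree_truncExpKernel_le : (truncExpKernel b k w).natDegree ≤ k :=
  natDegree_sum_le_of_forall_le _ _ fun _ hj =>
    (natDegree_C_mul_X_pow_le _ _).trans (Nat.le_of_lt_succ (mem_range.1 hj))

lemma gaussianInner_truncExpKernel (hb : 0 < b) {p : ℂ[X]} (hp : p.natDegree ≤ k) :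
    gaussianInner b p (truncExpKernel b k w) = π / b * p.eval w := by
  rw [gaussianInner_eq_sum hb (Nat.lt_succ_of_le hp), eval_eq_sum_range' (Nat.lt_succ_of_le hp),
    mul_sum]
  refine sum_congr rfl fun i hi => ?_
  rw [coeff_truncExpKernel (Nat.le_of_lt_succ (mem_range.1 hi))]
  have : (i ! : ℂ) ≠ 0 := by exact_mod_cast i.factorial_ne_zero
  have : (b : ℂ) ≠ 0 := by exact_mod_cast hb.ne'
  simp only [map_div₀, map_pow, map_mul, Complex.conj_ofReal, Complex.conj_conj, map_natCast]
  push_cast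
  field_simp
  ring

end Kernel

section Numerator
variable {b : ℝ} {k : ℕ} {w : ℂ}

lemma natDegree_C_mul_truncExpKernel_lt (c : ℂ) :
    (C c * truncExpKernel b k w).natDegree < (X ^ (k + 1) : ℂ[X]).natDegree := by
  rw [natDegree_X_pow]
  exact Nat.lt_succ_of_le ((natDegree_C_mul_le _ _).trans natDegree_truncExpKernel_le)

lemma monic_truncExpNumerator : (truncExpNumerator b k w).Monic :=
  (monic_X_pow _).sub_of_left (degree_lt_degree (natDegree_C_mul_truncExpKernel_lt _))

lemma natDegree_truncExpNumerator : (truncExpNumerator b k w).natDegree = k + 1 := by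
  rw [truncExpNumerator, natDegree_sub_eq_left_of_natDegree_lt
    (natDegree_C_mul_truncExpKernel_lt _), natDegree_X_pow]

lemma eval_truncExpNumerator_self (hb : 0 ≤ b) : (truncExpNumerator b k w).eval w = 0 := by
  have hK : (truncExpKernel b k w).eval w ≠ 0 := by
    rw [eval_truncExpKernel_self]
    exact_mod_cast (ekR_pos k (by positivity)).ne'
  simp [truncExpNumerator, hK]

/-- `X^{k+1}` is orthogonal to everything of degree `≤ k`, and so is the kernel to whatever
vanishes at `w`. -/
lemma gaussianInner_truncExpNumerator_eq_zero (hb : 0 < b) {r : ℂ[X]} (hr : r.natDegree ≤ k)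
    (hrw : r.eval w = 0) : gaussianInner b (truncExpNumerator b k w) r = 0 := by
  rw [truncExpNumerator, gaussianInner_sub_left hb, gaussianInner_C_mul_left hb,
    ← conj_gaussianInner, ← conj_gaussianInner r,
    gaussianInner_X_pow_eq_zero hb (Nat.lt_succ_of_le hr), gaussianInner_truncExpKernel hb hr, hrw]
  simp

lemma gaussianInner_truncExpNumerator_self (hb : 0 < b) :
    gaussianInner b (truncExpNumerator b k w) (truncExpNumerator b k w) =
      (((k + 1)! / b ^ (k + 2) * (ekR (k + 1) (b * ‖w‖ ^ 2) / ekR k (b * ‖w‖ ^ 2)) * π : ℝ) :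
        ℂ) := by
  set K := truncExpKernel b k w
  set E := ekR k (b * ‖w‖ ^ 2)
  have hE : E ≠ 0 := (ekR_pos k (by positivity)).ne'
  have hKw : K.eval w = E := eval_truncExpKernel_self
  have hKK : gaussianInner b K K = π / b * E := by
    rw [gaussianInner_truncExpKernel hb natDegree_truncExpKernel_le, hKw]
  have hXK : gaussianInner b (X ^ (k + 1)) K = 0 := by
    rw [← conj_gaussianInner, gaussianInner_X_pow_eq_zero hb
      (Nat.lt_succ_of_le natDegree_truncExpKernel_le), map_zero]
  have hc : conj (w ^ (k + 1) / E) * (w ^ (k + 1) / E * (π / b * E)) =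
      ((‖w‖ ^ 2) ^ (k + 1) / E * π / b : ℝ) := by
    calc conj (w ^ (k + 1) / E) * (w ^ (k + 1) / E * (π / b * E))
        = (conj w * w) ^ (k + 1) * (π / b / E) := by
          rw [map_div₀, map_pow, Complex.conj_ofReal, mul_pow]
          field_simp
      _ = _ := by
          rw [Complex.conj_mul']
          push_cast
          ring
  rw [truncExpNumerator, gaussianInner_sub_left hb, gaussianInner_sub_right hb,
    gaussianInner_sub_right hb, gaussianInner_C_mul_left hb, gaussianInner_C_mul_right hb,
    gaussianInner_C_mul_right hb, gaussianInner_C_mul_left hb, gaussianInner_X_pow_self hb,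
    gaussianInner_X_pow_eq_zero hb (Nat.lt_succ_of_le natDegree_truncExpKernel_le), hKK, hXK, hKw]
  simp only [mul_zero, sub_zero, zero_sub, sub_neg_eq_add]
  have hsucc : ekR (k + 1) (b * ‖w‖ ^ 2) = E + (b * ‖w‖ ^ 2) ^ (k + 1) / (k + 1)! :=
    sum_range_succ _ _
  rw [hc, ← Complex.ofReal_add, hsucc]
  congr 1
  have : ((k + 1)! : ℝ) ≠ 0 := by positivity
  field_simp
  ring

end Numerator

lemma Polynomial.Monic.divByMonic_X_sub_C {R : Type*} [CommRing R] {p : R[X]} {a : R}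
    (hp : p.Monic) (ha : p.IsRoot a) : (p /ₘ (X - C a)).Monic :=
  (monic_X_sub_C a).of_mul_monic_left (by rwa [mul_divByMonic_eq_iff_isRoot.2 ha])

lemma Polynomial.eval_divByMonic_X_sub_C {K : Type*} [Field K] {p : K[X]} {a z : K}
    (ha : p.IsRoot a) (hz : z ≠ a) : (p /ₘ (X - C a)).eval z = p.eval z / (z - a) := by
  conv_rhs => rw [← mul_divByMonic_eq_iff_isRoot.2 ha]
  rw [eval_mul, eval_sub, eval_X, eval_C, mul_div_cancel_left₀ _ (sub_ne_zero.2 hz)]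

lemma integral_mul_conj_mul_norm_sub_sq_mul_exp (b : ℝ) (w : ℂ) (f g : ℂ → ℂ) :
    ∫ z : ℂ, f z * conj (g z) * ((‖z - w‖ ^ 2 * Real.exp (-b * ‖z‖ ^ 2) : ℝ) : ℂ) =
      ∫ z : ℂ, f z * (z - w) * conj (g z * (z - w)) * (Real.exp (-b * ‖z‖ ^ 2) : ℂ) := by
  congr 1 with z
  rw [Complex.ofReal_mul, Complex.ofReal_pow, ← Complex.mul_conj', map_mul]
  ring

section Pc1
variable {a : ℝ} {N : ℕ}

lemma Pc1_eq_eval_div (k : ℕ) (z : ℂ) :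
    Pc1 a N k z = (truncExpNumerator N k a).eval z / (z - a) := by
  simp only [Pc1, truncExpNumerator, eval_sub, eval_mul, eval_C, eval_pow, eval_X,
    eval_truncExpKernel, Complex.conj_ofReal, Complex.ofReal_natCast]
  ring_nf

lemma isRoot_truncExpNumerator (k : ℕ) : (truncExpNumerator N k a).IsRoot a :=
  eval_truncExpNumerator_self N.cast_nonneg

lemma Pc1_mul_sub (k : ℕ) (z : ℂ) : Pc1 a N k z * (z - a) = (truncExpNumerator N k a).eval z := by
  rcases eq_or_ne z a with rfl | hz
  · rw [sub_self, mul_zero, isRoot_truncExpNumerator k]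
  · rw [Pc1_eq_eval_div, div_mul_cancel₀ _ (sub_ne_zero.2 hz)]

lemma exists_monic_eval_eq_Pc1 (k : ℕ) : ∃ P : ℂ[X], P.Monic ∧ P.natDegree = k ∧
    ∀ z : ℂ, z ≠ (a : ℂ) → P.eval z = Pc1 a N k z := by
  refine ⟨truncExpNumerator N k a /ₘ (X - C (a : ℂ)),
    monic_truncExpNumerator.divByMonic_X_sub_C (isRoot_truncExpNumerator k), ?_, fun z hz => ?_⟩
  · rw [natDegree_divByMonic _ (monic_X_sub_C _), natDegree_truncExpNumerator, natDegree_X_sub_C,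
      Nat.add_sub_cancel]
  · rw [eval_divByMonic_X_sub_C (isRoot_truncExpNumerator k) hz, Pc1_eq_eval_div]

lemma integral_Pc1_mul_conj_pow (hN : 0 < N) {k m : ℕ} (hm : m < k) :
    ∫ z : ℂ, Pc1 a N k z * conj z ^ m *
        ((‖z - (a : ℂ)‖ ^ 2 * Real.exp (-(N : ℝ) * ‖z‖ ^ 2) : ℝ) : ℂ) = 0 := by
  have hdeg : (X ^ m * (X - C (a : ℂ))).natDegree ≤ k := by
    rw [natDegree_mul (pow_ne_zero _ X_ne_zero) (X_sub_C_ne_zero _), natDegree_X_pow,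
      natDegree_X_sub_C]
    exact hm
  have := gaussianInner_truncExpNumerator_eq_zero (b := N) (w := a) (by exact_mod_cast hN) hdeg
    (by simp)
  simp_rw [← map_pow (starRingEnd ℂ)]
  rw [integral_mul_conj_mul_norm_sub_sq_mul_exp]
  simp_rw [Pc1_mul_sub]
  simpa only [gaussianInner, eval_mul, eval_pow, eval_X, eval_sub, eval_C] using this

lemma integral_Pc1_mul_conj_Pc1 (hN : 0 < N) {k l : ℕ} (hkl : k ≠ l) :
    ∫ z : ℂ, Pc1 a N k z * conj (Pc1 a N l z) *
        ((‖z - (a : ℂ)‖ ^ 2 * Real.exp (-(N : ℝ) * ‖z‖ ^ 2) : ℝ) : ℂ) = 0 := by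
  have orth : ∀ {k l : ℕ}, l < k → gaussianInner N (truncExpNumerator N k a)
      (truncExpNumerator N l a) = 0 := fun hlk =>
    gaussianInner_truncExpNumerator_eq_zero (by exact_mod_cast hN)
      (natDegree_truncExpNumerator.trans_le hlk) (isRoot_truncExpNumerator _)
  rw [integral_mul_conj_mul_norm_sub_sq_mul_exp]
  simp_rw [Pc1_mul_sub]
  rcases hkl.lt_or_gt with hkl | hlk
  · rw [← gaussianInner, ← conj_gaussianInner, orth hkl, map_zero]
  · exact orth hlk

lemma integral_norm_Pc1_sq (hN : 0 < N) (k : ℕ) :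
    ∫ z : ℂ, ‖Pc1 a N k z‖ ^ 2 * ‖z - (a : ℂ)‖ ^ 2 * Real.exp (-(N : ℝ) * ‖z‖ ^ 2) =
      hc1 a N k * π := by
  have h := gaussianInner_truncExpNumerator_self (k := k) (w := a) (b := N) (by exact_mod_cast hN)
  rw [Complex.norm_real, Real.norm_eq_abs, sq_abs] at h
  refine Complex.ofReal_injective (((integral_complex_ofReal).symm.trans ?_).trans h)
  congr 1 with z
  rw [← mul_pow, ← norm_mul, Pc1_mul_sub, Complex.ofReal_mul, Complex.ofReal_pow,
    ← Complex.mul_conj']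

lemma Pc1_eq_QregC (k : ℕ) (z : ℂ) :
    Pc1 a N k z = (z ^ (k + 1) - Complex.exp ((a : ℂ) * (N : ℂ) * (z - (a : ℂ))) *
        (QregC (k + 1) ((N : ℂ) * (a : ℂ) * z) / QregC (k + 1) ((N : ℂ) * (a : ℂ) ^ 2)) *
        (a : ℂ) ^ (k + 1)) / (z - (a : ℂ)) := by
  have hexp : Complex.exp ((a : ℂ) * N * (z - a)) *
      (Complex.exp (-(N * a * z)) / Complex.exp (-(N * a ^ 2))) = 1 := by
    rw [← Complex.exp_sub, ← Complex.exp_add, ← Complex.exp_zero]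
    ring_nf
  have hQ : ∀ x, QregC (k + 1) x = Complex.exp (-x) * ekC k x := fun _ => rfl
  rw [hQ, hQ, mul_div_mul_comm, ← mul_assoc, hexp, one_mul, Pc1]
  ring_nf

lemma hc1_eq_Qreg (k : ℕ) :
    hc1 a N k =
      (k + 1)! / (N : ℝ) ^ (k + 2) * (Qreg (k + 2) (N * a ^ 2) / Qreg (k + 1) (N * a ^ 2)) := by
  rw [hc1, Qreg, Qreg, mul_div_mul_left _ _ (Real.exp_ne_zero _)]
  rfl

end Pc1

theorem stmt_13_general (a : ℝ) (N : ℕ) (hN : 1 ≤ N) :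
    (∀ k : ℕ, ∃ Pk : Polynomial ℂ,
      Pk.Monic ∧ Pk.natDegree = k ∧
      (∀ z : ℂ, z ≠ (a : ℂ) → Pk.eval z = Pc1 a N k z) ∧
      (∀ m < k,
        ∫ z : ℂ, Pc1 a N k z * ((starRingEnd ℂ) z) ^ m *
            ((‖z - (a : ℂ)‖ ^ 2 * Real.exp (-(N : ℝ) * ‖z‖ ^ 2) : ℝ) : ℂ)
          = 0) ∧
      (∫ z : ℂ, ‖Pc1 a N k z‖ ^ 2 * ‖z - (a : ℂ)‖ ^ 2 *
            Real.exp (-(N : ℝ) * ‖z‖ ^ 2)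
        = hc1 a N k * Real.pi)) ∧
    (∀ k l : ℕ, k ≠ l →
      ∫ z : ℂ, Pc1 a N k z * (starRingEnd ℂ) (Pc1 a N l z) *
          ((‖z - (a : ℂ)‖ ^ 2 * Real.exp (-(N : ℝ) * ‖z‖ ^ 2) : ℝ) : ℂ)
        = 0) ∧
    (∀ k : ℕ, ∀ z : ℂ, z ≠ (a : ℂ) →
      Pc1 a N k z
        = (z ^ (k + 1) - Complex.exp ((a : ℂ) * (N : ℂ) * (z - (a : ℂ))) *
            (QregC (k + 1) ((N : ℂ) * (a : ℂ) * z) / QregC (k + 1) ((N : ℂ) * (a : ℂ) ^ 2)) *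
            (a : ℂ) ^ (k + 1)) / (z - (a : ℂ))) ∧
    (∀ k : ℕ, hc1 a N k
        = ((Nat.factorial (k + 1) : ℝ) / (N : ℝ) ^ (k + 2)) *
          (Qreg (k + 2) (N * a ^ 2) / Qreg (k + 1) (N * a ^ 2))) := by
  refine ⟨fun k => ?_, fun k l hkl => integral_Pc1_mul_conj_Pc1 hN hkl,
    fun k z _ => Pc1_eq_QregC k z, hc1_eq_Qreg⟩
  obtain ⟨P, hmonic, hdeg, heval⟩ := exists_monic_eval_eq_Pc1 (a := a) (N := N) k
  exact ⟨P, hmonic, hdeg, heval, fun m hm => integral_Pc1_mul_conj_pow hN hm,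
    integral_norm_Pc1_sq hN k⟩

/-- the exactly solvable case `c = 1`.  For every `k`, `P_k` agrees (off `z = a`)
with a monic polynomial of degree `k`, is orthogonal to all lower powers and to the other `P_l`
for the weight `|z-a|² e^{-N|z|²} dA`, and has squared norm `h_k`; moreover `P_k` and `h_k`
admit the equivalent expressions in terms of the regularized incomplete gamma function `Q`. -/
theorem stmt_13 (a : ℝ) (ha : 0 < a) (N : ℕ) (hN : 1 ≤ N) :
    (∀ k : ℕ, ∃ Pk : Polynomial ℂ,
      Pk.Monic ∧ Pk.natDegree = k ∧
      (∀ z : ℂ, z ≠ (a : ℂ) → Pk.eval z = Pc1 a N k z) ∧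
      (∀ m < k,
        ∫ z : ℂ, Pc1 a N k z * ((starRingEnd ℂ) z) ^ m *
            ((‖z - (a : ℂ)‖ ^ 2 * Real.exp (-(N : ℝ) * ‖z‖ ^ 2) : ℝ) : ℂ)
          = 0) ∧
      (∫ z : ℂ, ‖Pc1 a N k z‖ ^ 2 * ‖z - (a : ℂ)‖ ^ 2 *
            Real.exp (-(N : ℝ) * ‖z‖ ^ 2)
        = hc1 a N k * Real.pi)) ∧
    (∀ k l : ℕ, k ≠ l →
      ∫ z : ℂ, Pc1 a N k z * (starRingEnd ℂ) (Pc1 a N l z) *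
          ((‖z - (a : ℂ)‖ ^ 2 * Real.exp (-(N : ℝ) * ‖z‖ ^ 2) : ℝ) : ℂ)
        = 0) ∧
    (∀ k : ℕ, ∀ z : ℂ, z ≠ (a : ℂ) →
      Pc1 a N k z
        = (z ^ (k + 1) - Complex.exp ((a : ℂ) * (N : ℂ) * (z - (a : ℂ))) *
            (QregC (k + 1) ((N : ℂ) * (a : ℂ) * z) / QregC (k + 1) ((N : ℂ) * (a : ℂ) ^ 2)) *
            (a : ℂ) ^ (k + 1)) / (z - (a : ℂ))) ∧
    (∀ k : ℕ, hc1 a N k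
        = ((Nat.factorial (k + 1) : ℝ) / (N : ℝ) ^ (k + 2)) *
          (Qreg (k + 2) (N * a ^ 2) / Qreg (k + 1) (N * a ^ 2))) :=
  stmt_13_general a N hN

end
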